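/- arXiv:math/9406205 — 2 statements merged into one kernel-verified Lean document; each statement's English description precedes it below -/
import Mathlib

section
/- Let A be an m × n integer matrix and let p_1, ..., p_t be distinct primes whose product exceeds the absolute value of every r × r minor of A, where r is the rank of A over ℚ. Then the maximum over i of the rank of A modulo p_i equals r. -/
/-!
Over a field, the rank of a matrix is the largest size of a nonzero minor. Reducing an integer
matrix modulo a prime maps its minors to their residues, so no rank can go up, and the rank is
preserved modulo any prime not dividing a fixed nonzero `r × r` minor `D`. Distinct primes are
pairwise coprime, so if all the `p_i` divided `D` their product would divide `D` and hence be at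
most `|D|`.
-/

open Matrix Module Submodule

theorem exists_linearIndependent_comp_of_le_finrank_span {K V ι : Type*} [DivisionRing K]
    [AddCommGroup V] [Module K V] [Finite ι] (v : ι → V) {s : ℕ}
    (hs : s ≤ finrank K (span K (Set.range v))) :
    ∃ g : Fin s → ι, LinearIndependent K (v ∘ g) := by
  obtain ⟨κ, a, ha, hspan, hli⟩ := exists_linearIndependent' K v
  have : Finite κ := Finite.of_injective a ha
  have : Fintype κ := Fintype.ofFinite κ
  rw [← hspan, finrank_span_eq_card hli] at hs
  let e : Fin s ↪ κ := (Fin.castLEEmb hs).trans (Fintype.equivFin κ).symm.toEmbedding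
  exact ⟨a ∘ e, hli.comp e e.injective⟩

namespace Matrix

theorem det_submatrix_map {m n R S : Type*} [CommRing R] [CommRing S] (φ : R →+* S)
    (A : Matrix m n R) {s : ℕ} (f : Fin s → m) (g : Fin s → n) :
    ((A.map φ).submatrix f g).det = φ (A.submatrix f g).det := by
  rw [submatrix_map, RingHom.map_det, RingHom.mapMatrix_apply]

variable {K : Type*} [Field K] {m n : Type*} [Fintype n]

theorem le_rank_of_det_submatrix_ne_zero {A : Matrix m n K} {s : ℕ} (f : Fin s → m)
    (g : Fin s → n) (h : (A.submatrix f g).det ≠ 0) : s ≤ A.rank :=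
  calc s = (A.submatrix f g).rank := by rw [rank_of_det_ne_zero h, Fintype.card_fin]
    _ ≤ A.rank := rank_submatrix_le A f g

theorem exists_det_submatrix_ne_zero_of_le_rank [Fintype m] {A : Matrix m n K} {s : ℕ}
    (h : s ≤ A.rank) :
    ∃ (f : Fin s → m) (g : Fin s → n), (A.submatrix f g).det ≠ 0 := by
  rw [rank_eq_finrank_span_cols] at h
  obtain ⟨g, hg⟩ := exists_linearIndependent_comp_of_le_finrank_span Aᵀ h
  have hrows : s ≤ finrank K (span K (Set.range (A.submatrix id g).row)) := by
    rw [← rank_eq_finrank_span_row, ← rank_transpose]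
    exact (Fintype.card_fin s).symm.trans_le hg.rank_matrix.ge
  obtain ⟨f, hf⟩ := exists_linearIndependent_comp_of_le_finrank_span _ hrows
  refine ⟨f, g, ?_⟩
  rw [← isUnit_iff_ne_zero, ← isUnit_iff_isUnit_det]
  exact linearIndependent_rows_iff_isUnit.mp hf

theorem rank_map_le_rank_map_of_injective [Fintype m] {R L : Type*} [CommRing R] [Field L]
    (A : Matrix m n R) {φ : R →+* K} (hφ : Function.Injective φ) (ψ : R →+* L) :
    (A.map ψ).rank ≤ (A.map φ).rank := by
  obtain ⟨f, g, hψ⟩ := exists_det_submatrix_ne_zero_of_le_rank (le_refl (A.map ψ).rank)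
  rw [det_submatrix_map] at hψ
  refine le_rank_of_det_submatrix_ne_zero f g ?_
  rw [det_submatrix_map, map_ne_zero_iff φ hφ]
  exact fun h => hψ (by rw [h, map_zero])

end Matrix

theorem Int.exists_prime_not_dvd_of_abs_lt_prod {ι : Type*} [Fintype ι] {p : ι → ℕ}
    (hp : ∀ i, (p i).Prime) (hinj : Function.Injective p) {D : ℤ} (hD : D ≠ 0)
    (hlt : |D| < ∏ i, (p i : ℤ)) : ∃ i, ¬ (p i : ℤ) ∣ D := by
  by_contra! hdvd
  have hcoprime : Pairwise fun i j => IsCoprime (p i : ℤ) (p j) := fun i j hij =>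
    Nat.isCoprime_iff_coprime.mpr ((Nat.coprime_primes (hp i) (hp j)).mpr (hinj.ne hij))
  have hprod : ∏ i, (p i : ℤ) ∣ |D| :=
    (dvd_abs _ _).mpr (Fintype.prod_dvd_of_coprime hcoprime hdvd)
  exact (Int.le_of_dvd (abs_pos.mpr hD) hprod).not_gt hlt

/-- If `p_1, ..., p_t` are distinct primes whose product exceeds the absolute
value of every `r × r` minor of `A`, where `r` is the rank of `A` over `ℚ`,
then the maximum of the ranks of `A` modulo the `p_i` equals `r`. -/
theorem max_rank_mod_primes_eq_rank (m n t : ℕ)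
    (A : Matrix (Fin m) (Fin n) ℤ) (p : Fin t → ℕ)
    (hp : ∀ i, (p i).Prime) (hinj : Function.Injective p)
    (r : ℕ) (hr : r = (A.map (Int.cast : ℤ → ℚ)).rank)
    (hbig : ∀ (f : Fin r → Fin m) (g : Fin r → Fin n),
      |(A.submatrix f g).det| < ∏ i, (p i : ℤ)) :
    (Finset.univ.sup fun i => (A.map (Int.cast : ℤ → ZMod (p i))).rank) = r := by
  have : ∀ i, Fact (p i).Prime := fun i => ⟨hp i⟩
  have hle (i : Fin t) : (A.map (Int.castRingHom (ZMod (p i)))).rank ≤ r :=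
    hr ▸ A.rank_map_le_rank_map_of_injective (Int.castRingHom ℚ).injective_int _
  refine le_antisymm (Finset.sup_le fun i _ => hle i) ?_
  obtain ⟨f, g, hℚ⟩ :=
    exists_det_submatrix_ne_zero_of_le_rank (A := A.map (Int.castRingHom ℚ)) hr.le
  rw [det_submatrix_map, eq_intCast, Int.cast_ne_zero] at hℚ
  obtain ⟨i, hi⟩ := Int.exists_prime_not_dvd_of_abs_lt_prod hp hinj hℚ (hbig f g)
  have hmod : ((A.map (Int.castRingHom (ZMod (p i)))).submatrix f g).det ≠ 0 := by
    rwa [det_submatrix_map, eq_intCast, Ne, ZMod.intCast_zmod_eq_zero_iff_dvd]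
  exact (le_rank_of_det_submatrix_ne_zero f g hmod).trans
    (Finset.le_sup (f := fun i => (A.map (Int.castRingHom (ZMod (p i)))).rank)
      (Finset.mem_univ i))
end

section
/- Let A be an m × n integer matrix whose cokernel is finite of order dividing S, with S > 0. Then the Smith normal form of A over ℤ can be recovered from the Smith normal form of A over ℤ/Sℤ: the invariant factors of A are the gcds of the corresponding diagonal entries (lifted to ℤ) with S. -/
/-! Over `ZMod U`, the number of solutions of `X *ᵥ v = 0` does not change when `X` is multiplied
by invertible matrices, and for a diagonal `X` it is `∏ gcd (x_j, U)`. Reducing both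
diagonalizations of `A` modulo each divisor `U` of `S` thus gives `∏ gcd (d_j, U) = ∏ gcd (g_j, U)`,
where `d_j` are the invariant factors and `g_j = gcd (b'_j, S)`. Both are divisibility chains of
divisors of `S` (the `d_j` divide `|coker A|`), and such chains are determined by these products:
`U = d_last` forces `g_last ∣ d_last`, symmetrically `d_last ∣ g_last`, and one cancels the last
factor and inducts. -/

def IsSmithNormalForm {m n : ℕ} (B : Matrix (Fin m) (Fin n) ℤ) : Prop :=
  (∀ (i : Fin m) (j : Fin n), (i : ℕ) ≠ (j : ℕ) → B i j = 0) ∧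
  (∀ (i : Fin m) (j : Fin n), (i : ℕ) = (j : ℕ) → 0 ≤ B i j) ∧
  (∀ (i i' : Fin m) (j j' : Fin n), (i : ℕ) = (j : ℕ) →
    (i' : ℕ) = (i : ℕ) + 1 → (j' : ℕ) = (i : ℕ) + 1 → B i j ∣ B i' j')

def IsSmithNormalFormMod {m n S : ℕ} (B : Matrix (Fin m) (Fin n) (ZMod S)) : Prop :=
  (∀ (i : Fin m) (j : Fin n), (i : ℕ) ≠ (j : ℕ) → B i j = 0) ∧
  (∀ (i i' : Fin m) (j j' : Fin n), (i : ℕ) = (j : ℕ) →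
    (i' : ℕ) = (i : ℕ) + 1 → (j' : ℕ) = (i : ℕ) + 1 → B i j ∣ B i' j')

lemma Finset.eq_of_dvd_of_prod_eq_prod {ι : Type*} {s : Finset ι} {f g : ι → ℕ}
    (hg : ∀ i ∈ s, g i ≠ 0) (hfg : ∀ i ∈ s, f i ∣ g i)
    (h : ∏ i ∈ s, f i = ∏ i ∈ s, g i) : ∀ i ∈ s, f i = g i := by
  by_contra! ⟨i, hi, hne⟩
  have hle : ∀ i ∈ s, f i ≤ g i := fun i hi =>
    Nat.le_of_dvd (Nat.pos_of_ne_zero (hg i hi)) (hfg i hi)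
  refine (Finset.prod_lt_prod (fun i hi => Nat.pos_of_dvd_of_pos (hfg i hi) ?_) hle
    ⟨i, hi, (hle i hi).lt_of_ne hne⟩).ne h
  exact Nat.pos_of_ne_zero (hg i hi)

def IsDvdChain {α : Type*} [Monoid α] {n : ℕ} (d : Fin n → α) : Prop :=
  ∀ ⦃j k⦄, j ≤ k → d j ∣ d k

lemma IsDvdChain.last_dvd_last_of_prod_gcd_eq {S n : ℕ} (hS : S ≠ 0) {D G : Fin (n + 1) → ℕ}
    (hDS : ∀ j, D j ∣ S) (hGS : ∀ j, G j ∣ S) (hD : IsDvdChain D)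
    (h : ∀ U, U ∣ S → ∏ j, (D j).gcd U = ∏ j, (G j).gcd U) :
    G (Fin.last n) ∣ D (Fin.last n) := by
  have hprod : ∏ j, (G j).gcd (D (Fin.last n)) = ∏ j, G j := calc
    _ = ∏ j, (D j).gcd (D (Fin.last n)) := (h _ (hDS _)).symm
    _ = ∏ j, (D j).gcd S := by
      simp only [Nat.gcd_eq_left (hD (Fin.le_last _)), Nat.gcd_eq_left (hDS _)]
    _ = ∏ j, G j := by simp only [h S dvd_rfl, Nat.gcd_eq_left (hGS _)]
  rw [← Finset.eq_of_dvd_of_prod_eq_prod (fun j _ => ne_zero_of_dvd_ne_zero hS (hGS j))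
    (fun j _ => Nat.gcd_dvd_left _ _) hprod (Fin.last n) (Finset.mem_univ _)]
  exact Nat.gcd_dvd_right _ _

lemma IsDvdChain.castSucc {α : Type*} [Monoid α] {n : ℕ} {d : Fin (n + 1) → α}
    (hd : IsDvdChain d) : IsDvdChain (d ∘ Fin.castSucc) :=
  fun _ _ hjk => hd (Fin.castSucc_le_castSucc_iff.mpr hjk)

theorem IsDvdChain.eq_of_prod_gcd_eq {S : ℕ} (hS : S ≠ 0) :
    ∀ {n : ℕ} {D G : Fin n → ℕ}, (∀ j, D j ∣ S) → (∀ j, G j ∣ S) →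
      IsDvdChain D → IsDvdChain G →
      (∀ U, U ∣ S → ∏ j, (D j).gcd U = ∏ j, (G j).gcd U) → D = G
  | 0, _, _, _, _, _, _, _ => funext fun j => j.elim0
  | n + 1, D, G, hDS, hGS, hD, hG, h => by
    have hlast : D (Fin.last n) = G (Fin.last n) := Nat.dvd_antisymm
      (hG.last_dvd_last_of_prod_gcd_eq hS hGS hDS fun U hU => (h U hU).symm)
      (hD.last_dvd_last_of_prod_gcd_eq hS hDS hGS h)
    have hinit : D ∘ Fin.castSucc = G ∘ Fin.castSucc := by
      refine eq_of_prod_gcd_eq hS (fun j => hDS _) (fun j => hGS _) hD.castSucc hG.castSucc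
        fun U hU => ?_
      have hprod := h U hU
      rw [Fin.prod_univ_castSucc, Fin.prod_univ_castSucc, hlast] at hprod
      exact Nat.eq_of_mul_eq_mul_right
        (Nat.gcd_pos_of_pos_right _ (Nat.pos_of_ne_zero (ne_zero_of_dvd_ne_zero hS hU))) hprod
    exact funext (Fin.lastCases hlast (congrFun hinit))

namespace ZMod

lemma card_mul_eq_zero (U : ℕ) [NeZero U] (a : ZMod U) :
    Nat.card {x : ZMod U // a * x = 0} = U.gcd a.val := by
  have hker := IsAddCyclic.card_nsmulAddMonoidHom_ker (ZMod U) a.val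
  rw [Nat.card_zmod] at hker
  rw [← hker]
  refine Nat.card_congr (Equiv.subtypeEquivRight fun x => ?_)
  rw [AddMonoidHom.mem_ker, nsmulAddMonoidHom_apply, nsmul_eq_mul, natCast_zmod_val]

lemma gcd_val_natCast (U a : ℕ) : (a : ZMod U).val.gcd U = a.gcd U := by
  rw [val_natCast, ← Nat.gcd_rec, Nat.gcd_comm]

lemma gcd_val_dvd_gcd_val {S : ℕ} {a b : ZMod S} (hab : a ∣ b) : a.val.gcd S ∣ b.val.gcd S := by
  obtain ⟨t, rfl⟩ := hab
  refine Nat.dvd_gcd ?_ (Nat.gcd_dvd_right _ _)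
  rw [val_mul, Nat.dvd_mod_iff (Nat.gcd_dvd_right _ _)]
  exact (Nat.gcd_dvd_left _ _).mul_right _

lemma gcd_val_intCast_of_nonneg {U : ℕ} {a : ℤ} (ha : 0 ≤ a) :
    (a : ZMod U).val.gcd U = a.natAbs.gcd U := by
  obtain ⟨k, rfl⟩ := Int.eq_ofNat_of_zero_le ha
  rw [Int.cast_natCast, gcd_val_natCast, Int.natAbs_natCast]

lemma gcd_val_castHom {S U : ℕ} [NeZero S] (hU : U ∣ S) (a : ZMod S) :
    (castHom hU (ZMod U) a).val.gcd U = (a.val.gcd S).gcd U := by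
  rw [castHom_apply, cast_eq_val, gcd_val_natCast, Nat.gcd_assoc, Nat.gcd_eq_right hU]

end ZMod

namespace Matrix

section RectDiagonal

variable {m n : ℕ} {α : Type*}

def IsRectDiagonal [Zero α] (X : Matrix (Fin m) (Fin n) α) : Prop :=
  ∀ (i : Fin m) (j : Fin n), (i : ℕ) ≠ j → X i j = 0

def rectDiag (hnm : n ≤ m) (X : Matrix (Fin m) (Fin n) α) (j : Fin n) : α :=
  X (Fin.castLE hnm j) j

lemma IsRectDiagonal.map [Zero α] {β : Type*} [Zero β] {X : Matrix (Fin m) (Fin n) α}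
    (hX : X.IsRectDiagonal) {f : α → β} (hf : f 0 = 0) : (X.map f).IsRectDiagonal :=
  fun i j hij => by rw [map_apply, hX i j hij, hf]

lemma IsRectDiagonal.apply_eq_rectDiag [Zero α] {X : Matrix (Fin m) (Fin n) α}
    (hX : X.IsRectDiagonal) (hnm : n ≤ m) (i : Fin m) (j : Fin n) :
    X i j = if (i : ℕ) = j then rectDiag hnm X j else 0 := by
  split_ifs with hij
  · rw [rectDiag, show i = Fin.castLE hnm j from Fin.ext hij]
  · exact hX i j hij

lemma IsRectDiagonal.row_castLE [Zero α] {X : Matrix (Fin m) (Fin n) α}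
    (hX : X.IsRectDiagonal) (hnm : n ≤ m) (j : Fin n) :
    X (Fin.castLE hnm j) = Pi.single j (rectDiag hnm X j) := by
  ext k
  by_cases hkj : k = j
  · subst hkj
    rw [Pi.single_eq_same, rectDiag]
  · rw [Pi.single_eq_of_ne hkj, hX _ _ fun h => hkj (Fin.ext h.symm)]

lemma IsRectDiagonal.mulVec_eq_zero_iff [Semiring α] {X : Matrix (Fin m) (Fin n) α}
    (hX : X.IsRectDiagonal) (hnm : n ≤ m) (v : Fin n → α) :
    X *ᵥ v = 0 ↔ ∀ j, rectDiag hnm X j * v j = 0 := by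
  refine ⟨fun h j => ?_, fun h => funext fun i =>
    (Finset.sum_eq_zero fun j _ => ?_ : ∑ j, X i j * v j = 0)⟩
  · have hj := congrFun h (Fin.castLE hnm j)
    rwa [Pi.zero_apply, mulVec, dotProduct, Finset.sum_eq_single j
      (fun k _ hkj => by rw [hX _ _ fun h => hkj (Fin.ext h.symm), zero_mul]) (by simp)] at hj
  · rw [hX.apply_eq_rectDiag hnm]
    split_ifs
    · exact h j
    · exact zero_mul _

lemma isDvdChain_rectDiag [Monoid α] {X : Matrix (Fin m) (Fin n) α} (hnm : n ≤ m)
    (hX : ∀ (i i' : Fin m) (j j' : Fin n), (i : ℕ) = j → (i' : ℕ) = i + 1 → (j' : ℕ) = i + 1 →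
      X i j ∣ X i' j') : IsDvdChain (rectDiag hnm X) := by
  intro j k hjk
  obtain ⟨k, hk⟩ := k
  have hjk' : (j : ℕ) ≤ k := hjk
  induction k, hjk' using Nat.le_induction with
  | base => rfl
  | succ k hle ih => exact (ih (by omega) hle).trans (hX _ _ _ _ rfl rfl rfl)

end RectDiagonal

lemma card_ker_mulVec_mul_mul {m n R : Type*} [Fintype m] [Fintype n] [DecidableEq m]
    [DecidableEq n] [CommRing R] {P : Matrix m m R} {Q : Matrix n n R} (hP : IsUnit P)
    (hQ : IsUnit Q) (X : Matrix m n R) :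
    Nat.card {v : n → R // (P * X * Q) *ᵥ v = 0} = Nat.card {v : n → R // X *ᵥ v = 0} := by
  let e : (n → R) ≃ (n → R) :=
    .ofBijective (Q *ᵥ ·) ⟨mulVec_injective_of_isUnit hQ, mulVec_surjective_iff_isUnit.mpr hQ⟩
  refine Nat.card_congr (e.subtypeEquiv fun v => ?_)
  rw [← mulVec_mulVec, ← mulVec_mulVec]
  exact (mulVec_injective_of_isUnit hP).eq_iff' (mulVec_zero P)

lemma IsRectDiagonal.card_ker_mulVec {m n U : ℕ} [NeZero U]
    {X : Matrix (Fin m) (Fin n) (ZMod U)} (hX : X.IsRectDiagonal) (hnm : n ≤ m) :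
    Nat.card {v : Fin n → ZMod U // X *ᵥ v = 0} = ∏ j, (rectDiag hnm X j).val.gcd U := by
  rw [Nat.card_congr ((Equiv.subtypeEquivRight (hX.mulVec_eq_zero_iff hnm)).trans
    (Equiv.subtypePiEquivPi (p := fun j x => rectDiag hnm X j * x = 0))), Nat.card_pi]
  simp only [ZMod.card_mul_eq_zero, Nat.gcd_comm]

lemma card_ker_mulVec_map_eq_prod_gcd {R : Type*} [CommRing R] {m n U : ℕ} [NeZero U]
    (f : R →+* ZMod U) (hnm : n ≤ m) {A B : Matrix (Fin m) (Fin n) R}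
    {P : Matrix (Fin m) (Fin m) R} {Q : Matrix (Fin n) (Fin n) R} (hP : IsUnit P.det)
    (hQ : IsUnit Q.det) (hPAQ : P * A * Q = B) (hB : B.IsRectDiagonal) :
    Nat.card {v : Fin n → ZMod U // A.map f *ᵥ v = 0} =
      ∏ j, (f (rectDiag hnm B j)).val.gcd U := by
  have hunit {k : ℕ} {M : Matrix (Fin k) (Fin k) R} (hM : IsUnit M.det) : IsUnit (M.map f) :=
    (isUnit_iff_isUnit_det _).mpr ((RingHom.map_det f M).symm ▸ hM.map f)
  rw [← card_ker_mulVec_mul_mul (hunit hP) (hunit hQ), ← Matrix.map_mul, ← Matrix.map_mul, hPAQ,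
    (hB.map (map_zero f)).card_ker_mulVec hnm]
  rfl

lemma closure_rows_eq_range_vecMulLinear {m n : Type*} [Fintype m] (M : Matrix m n ℤ) :
    AddSubgroup.closure (Set.range fun i => M i) =
      (LinearMap.range M.vecMulLinear).toAddSubgroup := by
  rw [range_vecMulLinear, Submodule.span_int_eq_addSubgroupClosure]
  rfl

lemma index_closure_rows_mul_mul {m n : Type*} [Fintype m] [Fintype n] [DecidableEq m]
    [DecidableEq n] {P : Matrix m m ℤ} {Q : Matrix n n ℤ} (hP : IsUnit P) (hQ : IsUnit Q)
    (A : Matrix m n ℤ) :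
    (AddSubgroup.closure (Set.range fun i => (P * A * Q) i)).index =
      (AddSubgroup.closure (Set.range fun i => A i)).index := by
  have hcomp : (P * A * Q).vecMulLinear = Q.vecMulLinear ∘ₗ A.vecMulLinear ∘ₗ P.vecMulLinear :=
    LinearMap.ext fun v => by simp [vecMul_vecMul]
  rw [closure_rows_eq_range_vecMulLinear, closure_rows_eq_range_vecMulLinear, hcomp,
    LinearMap.range_comp, LinearMap.range_comp_of_range_eq_top _
      (LinearMap.range_eq_top.mpr (vecMul_surjective_iff_isUnit.mpr hP)),
    Submodule.map_toAddSubgroup]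
  exact AddSubgroup.index_map_of_bijective
    ⟨vecMul_injective_of_isUnit hQ, vecMul_surjective_iff_isUnit.mpr hQ⟩ _

lemma IsRectDiagonal.closure_rows_eq_pi {m n : ℕ} {B : Matrix (Fin m) (Fin n) ℤ}
    (hB : B.IsRectDiagonal) (hnm : n ≤ m) :
    AddSubgroup.closure (Set.range fun i => B i) =
      AddSubgroup.pi Set.univ fun j => AddSubgroup.zmultiples (rectDiag hnm B j) := by
  refine le_antisymm ((AddSubgroup.closure_le _).mpr ?_) (AddSubgroup.pi_le_iff.mpr fun j => ?_)
  · rintro _ ⟨i, rfl⟩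
    rw [SetLike.mem_coe, AddSubgroup.mem_pi]
    intro j _
    beta_reduce
    rw [hB.apply_eq_rectDiag hnm]
    split_ifs
    · exact AddSubgroup.mem_zmultiples _
    · exact zero_mem _
  · rw [AddMonoidHom.map_zmultiples, AddSubgroup.zmultiples_le, AddMonoidHom.single_apply,
      ← hB.row_castLE hnm]
    exact AddSubgroup.subset_closure ⟨_, rfl⟩

lemma IsRectDiagonal.index_closure_rows {m n : ℕ} {B : Matrix (Fin m) (Fin n) ℤ}
    (hB : B.IsRectDiagonal) (hnm : n ≤ m) :
    (AddSubgroup.closure (Set.range fun i => B i)).index = ∏ j, (rectDiag hnm B j).natAbs := by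
  simp only [hB.closure_rows_eq_pi hnm, AddSubgroup.index_pi, Int.index_zmultiples]

lemma prod_gcd_rectDiag_int_eq_zmod {m n S U : ℕ} [NeZero S] (hU : U ∣ S) (hnm : n ≤ m)
    {A B : Matrix (Fin m) (Fin n) ℤ} {P : Matrix (Fin m) (Fin m) ℤ} {Q : Matrix (Fin n) (Fin n) ℤ}
    (hP : IsUnit P.det) (hQ : IsUnit Q.det) (hPAQ : P * A * Q = B) (hB : B.IsRectDiagonal)
    (hB_nonneg : ∀ j, 0 ≤ rectDiag hnm B j) {B' : Matrix (Fin m) (Fin n) (ZMod S)}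
    {P' : Matrix (Fin m) (Fin m) (ZMod S)} {Q' : Matrix (Fin n) (Fin n) (ZMod S)}
    (hP' : IsUnit P'.det) (hQ' : IsUnit Q'.det)
    (hPAQ' : P' * A.map (Int.cast : ℤ → ZMod S) * Q' = B') (hB' : B'.IsRectDiagonal) :
    ∏ j, (rectDiag hnm B j).natAbs.gcd U = ∏ j, ((rectDiag hnm B' j).val.gcd S).gcd U := by
  have : NeZero U := ⟨ne_zero_of_dvd_ne_zero (NeZero.ne S) hU⟩
  have hmap : (A.map (Int.cast : ℤ → ZMod S)).map (ZMod.castHom hU (ZMod U)) =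
      A.map (Int.castRingHom (ZMod U)) := by
    ext
    simp
  have hZS := card_ker_mulVec_map_eq_prod_gcd (ZMod.castHom hU (ZMod U)) hnm hP' hQ' hPAQ' hB'
  rw [hmap, card_ker_mulVec_map_eq_prod_gcd _ hnm hP hQ hPAQ hB] at hZS
  refine (Finset.prod_congr rfl fun j _ => ?_).trans
    (hZS.trans (Finset.prod_congr rfl fun j _ => ?_))
  · exact (ZMod.gcd_val_intCast_of_nonneg (hB_nonneg j)).symm
  · exact ZMod.gcd_val_castHom hU _

end Matrix

theorem smith_normal_form_from_modular_general (m n : ℕ)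
    (A : Matrix (Fin m) (Fin n) ℤ) (S : ℕ) (hSpos : 0 < S)
    (hrank : (A.map (Int.cast : ℤ → ℚ)).rank = n)
    (hcard : Nat.card ((Fin n → ℤ) ⧸ AddSubgroup.closure (Set.range fun i => A i)) ∣ S)
    (P : Matrix (Fin m) (Fin m) ℤ) (Q : Matrix (Fin n) (Fin n) ℤ)
    (B : Matrix (Fin m) (Fin n) ℤ)
    (hP : IsUnit P.det) (hQ : IsUnit Q.det) (hPAQ : P * A * Q = B)
    (hB : IsSmithNormalForm B)
    (P' : Matrix (Fin m) (Fin m) (ZMod S)) (Q' : Matrix (Fin n) (Fin n) (ZMod S))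
    (B' : Matrix (Fin m) (Fin n) (ZMod S))
    (hP' : IsUnit P'.det) (hQ' : IsUnit Q'.det)
    (hPAQ' : P' * A.map (Int.cast : ℤ → ZMod S) * Q' = B')
    (hB' : IsSmithNormalFormMod B') :
    ∀ (i : Fin m) (j : Fin n), (i : ℕ) = (j : ℕ) →
      B i j = (Nat.gcd (B' i j).val S : ℤ) := by
  have : NeZero S := ⟨hSpos.ne'⟩
  have hnm : n ≤ m := by simpa [hrank] using (A.map (Int.cast : ℤ → ℚ)).rank_le_card_height
  have hDS (j : Fin n) : (Matrix.rectDiag hnm B j).natAbs ∣ S := by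
    have hprod : ∏ j, (Matrix.rectDiag hnm B j).natAbs ∣ S := by
      rwa [← Matrix.IsRectDiagonal.index_closure_rows hB.1 hnm, ← hPAQ,
        Matrix.index_closure_rows_mul_mul ((Matrix.isUnit_iff_isUnit_det P).mpr hP)
          ((Matrix.isUnit_iff_isUnit_det Q).mpr hQ)]
    exact (Finset.dvd_prod_of_mem _ (Finset.mem_univ j)).trans hprod
  have hDG := IsDvdChain.eq_of_prod_gcd_eq hSpos.ne' hDS (fun j => Nat.gcd_dvd_right _ S)
    (fun j k hjk => Int.natAbs_dvd_natAbs.mpr (Matrix.isDvdChain_rectDiag hnm hB.2.2 hjk))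
    (fun j k hjk => ZMod.gcd_val_dvd_gcd_val (Matrix.isDvdChain_rectDiag hnm hB'.2 hjk))
    fun U hU => Matrix.prod_gcd_rectDiag_int_eq_zmod hU hnm hP hQ hPAQ hB.1
      (fun j => hB.2.1 _ j rfl) hP' hQ' hPAQ' hB'.1
  intro i j hij
  obtain rfl : i = Fin.castLE hnm j := Fin.ext hij
  rw [← Int.natAbs_of_nonneg (hB.2.1 _ j rfl)]
  exact congrArg _ (congrFun hDG j)

/-- If the cokernel of `A` is finite of order dividing `S > 0` (so `A` has full
column rank), then the Smith normal form of `A` over `ℤ` is recovered from a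
Smith normal form of `A` over `ℤ/Sℤ`: each invariant factor of `A` is the gcd
of the corresponding diagonal entry (lifted to `ℤ`) with `S`. -/
theorem smith_normal_form_from_modular (m n : ℕ)
    (A : Matrix (Fin m) (Fin n) ℤ) (S : ℕ) (hSpos : 0 < S)
    (hrank : (A.map (Int.cast : ℤ → ℚ)).rank = n)
    (hfin : Finite ((Fin n → ℤ) ⧸ AddSubgroup.closure (Set.range fun i => A i)))
    (hcard : Nat.card ((Fin n → ℤ) ⧸ AddSubgroup.closure (Set.range fun i => A i)) ∣ S)
    (P : Matrix (Fin m) (Fin m) ℤ) (Q : Matrix (Fin n) (Fin n) ℤ)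
    (B : Matrix (Fin m) (Fin n) ℤ)
    (hP : IsUnit P.det) (hQ : IsUnit Q.det) (hPAQ : P * A * Q = B)
    (hB : IsSmithNormalForm B)
    (P' : Matrix (Fin m) (Fin m) (ZMod S)) (Q' : Matrix (Fin n) (Fin n) (ZMod S))
    (B' : Matrix (Fin m) (Fin n) (ZMod S))
    (hP' : IsUnit P'.det) (hQ' : IsUnit Q'.det)
    (hPAQ' : P' * A.map (Int.cast : ℤ → ZMod S) * Q' = B')
    (hB' : IsSmithNormalFormMod B') :
    ∀ (i : Fin m) (j : Fin n), (i : ℕ) = (j : ℕ) →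
      B i j = (Nat.gcd (B' i j).val S : ℤ) :=
  smith_normal_form_from_modular_general m n A S hSpos hrank hcard P Q B hP hQ hPAQ hB P' Q' B' hP'
    hQ' hPAQ' hB'
end
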